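/- arXiv:2107.13138 — 11 statements merged into one kernel-verified Lean document; each statement's English description precedes it below -/
import Mathlib

section
/- For all real numbers r, t with 0 < r < 1 and 0 < t < 1 and all reals p, q ≥ 2, the quantity $\bar{j}_{p,q}(r,t) = -2r^p t^q + (p+q)r^2t^2 - (p-1)t^2 - (q-1)r^2$ is nonpositive. -/
theorem stmt_0 (p q r t : ℝ) (hp : 2 ≤ p) (hq : 2 ≤ q)
    (hr0 : 0 < r) (hr1 : r < 1) (ht0 : 0 < t) (ht1 : t < 1) :
    -2 * r ^ p * t ^ q + (p + q) * r ^ 2 * t ^ 2 - (p - 1) * t ^ 2 - (q - 1) * r ^ 2 ≤ 0 := by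
  set x : ℝ := r ^ 2 with hxdef
  set y : ℝ := t ^ 2 with hydef
  have hx0 : 0 < x := by positivity
  have hx1 : x < 1 := by nlinarith
  have hy0 : 0 < y := by positivity
  have hy1 : y < 1 := by nlinarith
  have ha : 1 ≤ p / 2 := by linarith
  have hb : 1 ≤ q / 2 := by linarith
  set a : ℝ := p / 2 with hadef
  set b : ℝ := q / 2 with hbdef
  -- r ^ p = x ^ a (rpow)
  have hrx : r ^ p = x ^ a := by
    rw [hxdef, ← Real.rpow_natCast r 2, ← Real.rpow_mul hr0.le]
    norm_num [hadef]
    congr 1; ring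
  have hty : t ^ q = y ^ b := by
    rw [hydef, ← Real.rpow_natCast t 2, ← Real.rpow_mul ht0.le]
    norm_num [hbdef]
    congr 1; ring
  have hXpos : 0 < x ^ a := Real.rpow_pos_of_pos hx0 a
  have hYpos : 0 < y ^ b := Real.rpow_pos_of_pos hy0 b
  -- Bernoulli
  have hX : 1 + a * (x - 1) ≤ x ^ a := by
    have := one_add_mul_self_le_rpow_one_add (s := x - 1) (by linarith) ha
    simpa using this
  have hY : 1 + b * (y - 1) ≤ y ^ b := by
    have := one_add_mul_self_le_rpow_one_add (s := y - 1) (by linarith) hb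
    simpa using this
  set X : ℝ := x ^ a
  set Y : ℝ := y ^ b
  have hpa : p = 2 * a := by rw [hadef]; ring
  have hqb : q = 2 * b := by rw [hbdef]; ring
  rw [hrx, hty, hpa, hqb]
  -- key algebraic inequality
  have key : 2 * (a + b) * (x * y) - (2 * a - 1) * y - (2 * b - 1) * x
      ≤ 2 * (1 + a * (x - 1)) * (1 + b * (y - 1)) := by
    nlinarith [mul_nonneg (mul_nonneg (mul_nonneg (by linarith : (0:ℝ) ≤ a - 1)
        (by linarith : (0:ℝ) ≤ b - 1)) (by linarith : (0:ℝ) ≤ 1 - x))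
        (by linarith : (0:ℝ) ≤ 1 - y),
      mul_nonneg (by linarith : (0:ℝ) ≤ 1 - x) hy0.le,
      mul_nonneg (by linarith : (0:ℝ) ≤ 1 - y) hx0.le]
  rcases le_or_gt 0 (1 + a * (x - 1)) with hA | hA
  · rcases le_or_gt 0 (1 + b * (y - 1)) with hB | hB
    · have hAB : (1 + a * (x - 1)) * (1 + b * (y - 1)) ≤ X * Y :=
        mul_le_mul hX hY hB hXpos.le
      linarith
    · have hAB : (1 + a * (x - 1)) * (1 + b * (y - 1)) ≤ 0 :=
        mul_nonpos_of_nonneg_of_nonpos hA hB.le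
      linarith [mul_pos hXpos hYpos]
  · rcases le_or_gt 0 (1 + b * (y - 1)) with hB | hB
    · have hAB : (1 + a * (x - 1)) * (1 + b * (y - 1)) ≤ 0 :=
        mul_nonpos_of_nonpos_of_nonneg hA.le hB
      linarith [mul_pos hXpos hYpos]
    · -- both negative: the polynomial part itself is nonpositive
      nlinarith [mul_pos hXpos hYpos,
        mul_nonneg hy0.le (by nlinarith : (0:ℝ) ≤ 2 * a - 1 - 2 * a * x),
        mul_nonneg hx0.le (by nlinarith : (0:ℝ) ≤ 2 * b - 1 - 2 * b * y)]
end

section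
/- For every real number $t$ with $0 < t < 1$ and every real $q \geq 2$, one has $(1 - t^{2q-2}) - (q-1) t^{q-2}(1 - t^2) \geq 0$. -/
lemma sinh_convex : ConvexOn ℝ (Set.Ici (0:ℝ)) Real.sinh := by
  apply convexOn_of_deriv2_nonneg (convex_Ici 0) Real.continuous_sinh.continuousOn
    Real.differentiable_sinh.differentiableOn
  · rw [Real.deriv_sinh]; exact Real.differentiable_cosh.differentiableOn
  · intro x hx
    have : deriv^[2] Real.sinh x = Real.sinh x := by
      show deriv (deriv Real.sinh) x = _
      rw [Real.deriv_sinh, Real.deriv_cosh]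
    rw [this]
    have hx0 : (0:ℝ) ≤ x := le_of_lt (by simpa using hx)
    calc (0:ℝ) = Real.sinh 0 := by simp
      _ ≤ Real.sinh x := Real.sinh_le_sinh.2 hx0

lemma sinh_mul_ge (p u : ℝ) (hp : 1 ≤ p) (hu : 0 ≤ u) :
    p * Real.sinh u ≤ Real.sinh (p * u) := by
  have hp0 : 0 < p := by linarith
  have h := sinh_convex.2
      (show p*u ∈ Set.Ici (0:ℝ) from Set.mem_Ici.2 (mul_nonneg hp0.le hu))
      (Set.mem_Ici.2 (le_refl (0:ℝ)))
      (show (0:ℝ) ≤ 1/p by positivity)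
      (show (0:ℝ) ≤ 1 - 1/p by rw [sub_nonneg, div_le_one hp0]; linarith)
      (show 1/p + (1 - 1/p) = 1 by ring)
  simp only [smul_eq_mul, mul_zero, Real.sinh_zero, add_zero] at h
  have h2 : (1/p) * (p*u) = u := by field_simp
  rw [h2] at h
  calc p * Real.sinh u ≤ p * (1/p * Real.sinh (p*u)) := by
        exact mul_le_mul_of_nonneg_left h (le_of_lt hp0)
    _ = Real.sinh (p*u) := by field_simp

theorem stmt_1 (t q : ℝ) (ht0 : 0 < t) (ht1 : t < 1) (hq : 2 ≤ q) :
    (1 - t ^ (2 * q - 2)) - (q - 1) * t ^ (q - 2) * (1 - t ^ 2) ≥ 0 := by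
  have hL : Real.log t < 0 := Real.log_neg ht0 ht1
  set u : ℝ := -Real.log t with hu
  have hu0 : 0 < u := by simp [hu]; linarith
  have key := sinh_mul_ge (q - 1) u (by linarith) hu0.le
  rw [Real.sinh_eq, Real.sinh_eq] at key
  set A := Real.exp ((q-1)*u) with hA
  set B := Real.exp (-((q-1)*u)) with hB
  set c := Real.exp u with hc
  set d := Real.exp (-u) with hd
  have hAB : A * B = 1 := by rw [hA, hB, ← Real.exp_add]; simp
  have hcd : c * d = 1 := by rw [hc, hd, ← Real.exp_add]; simp
  have hB0 : 0 < B := Real.exp_pos _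
  have hd0 : 0 < d := Real.exp_pos _
  have ht : t = d := by rw [hd, hu]; simp [Real.exp_log ht0]
  have h1 : t ^ (2 * q - 2) = B * B := by
    rw [Real.rpow_def_of_pos ht0, hB, ← Real.exp_add]
    congr 1; simp [hu]; ring
  have h2 : t ^ (q - 2) = c * B := by
    rw [Real.rpow_def_of_pos ht0, hc, hB, ← Real.exp_add]
    congr 1; simp [hu]; ring
  have h3 : t ^ 2 = d * d := by rw [ht]; ring
  rw [h1, h2, h3]
  have key' : A - B ≥ (q-1) * (c - d) := by
    linarith [key]
  have hdd : c * (d * d) = d := by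
    calc c * (d*d) = (c*d)*d := by ring
    _ = d := by rw [hcd]; ring
  have expand : (1 - B*B) - (q-1)*(c*B)*(1 - d*d) = B * ((A - B) - (q-1)*(c - d)) := by
    linear_combination (-1 : ℝ) * hAB + (q-1)*d*B*hcd
  rw [ge_iff_le, ← sub_nonneg] at key'
  rw [expand]
  positivity
end

section
/- For all integers $p, q \geq 2$ and all real $r, t \in [0,1)$, one has $1 - r^{2p-2} t^{2q-2} \geq r^{p-2} t^{q-2}\big((p-1)(1-r^2)t^2 + (q-1)(1-t^2)r^2\big)$. -/
private lemma aux_geom (m : ℕ) (r : ℝ) (hr0 : 0 ≤ r) (hr1 : r ≤ 1) :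
    ((m : ℝ) + 1) * (1 - r ^ 2) * r ^ m ≤ 1 - r ^ (2 * m + 2) := by
  induction m with
  | zero => norm_num
  | succ n ih =>
    have h1 : 1 + ((n : ℝ) + 1) * (r - 1) ≤ r ^ (n + 1) := by
      have := one_add_mul_le_pow (by linarith : (-2 : ℝ) ≤ r - 1) (n + 1)
      simpa using this
    have hs : 0 ≤ r ^ n := pow_nonneg hr0 n
    have e0 : r ^ (n + 1) = r ^ n * r := pow_succ r n
    have e1 : r ^ (2 * n + 2) = (r ^ n) ^ 2 * r ^ 2 := by
      rw [show 2 * n + 2 = n + n + 2 by ring, pow_add, pow_add]; ring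
    have e2 : r ^ (2 * (n + 1) + 2) = (r ^ n) ^ 2 * r ^ 2 * r ^ 2 := by
      rw [show 2 * (n + 1) + 2 = n + n + 2 + 2 by ring, pow_add, pow_add, pow_add]; ring
    rw [e0] at h1
    rw [e1] at ih
    rw [e0, e2]
    have h2 : 0 ≤ ((n : ℝ) + 1) + (r ^ n * r) * r - ((n : ℝ) + 2) * r := by
      nlinarith [mul_le_mul_of_nonneg_left h1 hr0, sq_nonneg (1 - r)]
    have h3 : 0 ≤ (1 - r ^ 2) * (r ^ n * (((n : ℝ) + 1) + (r ^ n * r) * r - ((n : ℝ) + 2) * r)) := by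
      apply mul_nonneg (by nlinarith) (mul_nonneg hs h2)
    push_cast
    nlinarith [ih, h3]

theorem stmt_2 (p q : ℕ) (hp : 2 ≤ p) (hq : 2 ≤ q) (r t : ℝ)
    (hr0 : 0 ≤ r) (hr1 : r < 1) (ht0 : 0 ≤ t) (ht1 : t < 1) :
    1 - r ^ (2 * p - 2) * t ^ (2 * q - 2) ≥
      r ^ (p - 2) * t ^ (q - 2) *
        (((p : ℝ) - 1) * (1 - r ^ 2) * t ^ 2 + ((q : ℝ) - 1) * (1 - t ^ 2) * r ^ 2) := by
  obtain ⟨a, rfl⟩ : ∃ a, p = a + 2 := ⟨p - 2, by omega⟩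
  obtain ⟨b, rfl⟩ : ∃ b, q = b + 2 := ⟨q - 2, by omega⟩
  have hr1' : r ≤ 1 := hr1.le
  have ht1' : t ≤ 1 := ht1.le
  have hA := aux_geom a r hr0 hr1'
  have hB := aux_geom b t ht0 ht1'
  have ep1 : 2 * (a + 2) - 2 = 2 * a + 2 := by omega
  have ep2 : (a + 2) - 2 = a := by omega
  have eq1 : 2 * (b + 2) - 2 = 2 * b + 2 := by omega
  have eq2 : (b + 2) - 2 = b := by omega
  rw [ep1, ep2, eq1, eq2]
  have er1 : r ^ (2 * a + 2) = (r ^ a) ^ 2 * r ^ 2 := by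
    rw [show 2 * a + 2 = a + a + 2 by ring, pow_add, pow_add]; ring
  have et1 : t ^ (2 * b + 2) = (t ^ b) ^ 2 * t ^ 2 := by
    rw [show 2 * b + 2 = b + b + 2 by ring, pow_add, pow_add]; ring
  rw [er1] at hA
  rw [et1] at hB
  rw [er1, et1]
  push_cast at hA hB ⊢
  set s := r ^ a with hsdef
  set w := t ^ b with hwdef
  have hs : 0 ≤ s := pow_nonneg hr0 a
  have hw : 0 ≤ w := pow_nonneg ht0 b
  have hLA : 0 ≤ ((a : ℝ) + 1) * (1 - r ^ 2) * s := by
    apply mul_nonneg (mul_nonneg (by positivity) (by nlinarith)) hs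
  have hLB : 0 ≤ ((b : ℝ) + 1) * (1 - t ^ 2) * w := by
    apply mul_nonneg (mul_nonneg (by positivity) (by nlinarith)) hw
  have Q1 : 0 ≤ 1 + w ^ 2 * t ^ 2 - 2 * w * t ^ 2 := by
    nlinarith [sq_nonneg (1 - w * t), mul_nonneg (mul_nonneg hw ht0) (sub_nonneg.2 ht1')]
  have Q2 : 0 ≤ 1 + s ^ 2 * r ^ 2 - 2 * s * r ^ 2 := by
    nlinarith [sq_nonneg (1 - s * r), mul_nonneg (mul_nonneg hs hr0) (sub_nonneg.2 hr1')]
  have P1 : 0 ≤ ((a : ℝ) + 1) * (1 - r ^ 2) * s * (1 + w ^ 2 * t ^ 2 - 2 * w * t ^ 2) :=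
    mul_nonneg hLA Q1
  have P2 : 0 ≤ (1 - s ^ 2 * r ^ 2 - ((a : ℝ) + 1) * (1 - r ^ 2) * s) * (1 + w ^ 2 * t ^ 2) := by
    apply mul_nonneg (by linarith) (by positivity)
  have P3 : 0 ≤ ((b : ℝ) + 1) * (1 - t ^ 2) * w * (1 + s ^ 2 * r ^ 2 - 2 * s * r ^ 2) :=
    mul_nonneg hLB Q2
  have P4 : 0 ≤ (1 - w ^ 2 * t ^ 2 - ((b : ℝ) + 1) * (1 - t ^ 2) * w) * (1 + s ^ 2 * r ^ 2) := by
    apply mul_nonneg (by linarith) (by positivity)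
  linarith [P1, P2, P3, P4]
end

section
/- For all real numbers $p, q \geq 1$ and all $r, t \in (0,1)$, the quantity $\bar{l}_{p,q}(r,t) = (t-r)^2 + r^2(1-t^2) + r^{p-1}t^{q+1} + r^{p+1}t^{q+1} - 2 r^p t^q$ is nonnegative. -/
theorem stmt_3 (p q r t : ℝ) (hp : 1 ≤ p) (hq : 1 ≤ q)
    (hr0 : 0 < r) (hr1 : r < 1) (ht0 : 0 < t) (ht1 : t < 1) :
    0 ≤ (t - r) ^ 2 + r ^ 2 * (1 - t ^ 2) + r ^ (p - 1) * t ^ (q + 1)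
        + r ^ (p + 1) * t ^ (q + 1) - 2 * r ^ p * t ^ q := by
  have hrp : r ^ p = r ^ (p - 1) * r := by
    rw [← Real.rpow_add_one hr0.ne']; ring_nf
  have hrp1 : r ^ (p + 1) = r ^ (p - 1) * r * r := by
    rw [← Real.rpow_add_one hr0.ne', ← Real.rpow_add_one hr0.ne']; ring_nf
  have htq1 : t ^ (q + 1) = t ^ q * t := Real.rpow_add_one ht0.ne' q
  have hR : (0:ℝ) ≤ r ^ (p - 1) := (Real.rpow_pos_of_pos hr0 _).le
  have hT : (0:ℝ) ≤ t ^ q := (Real.rpow_pos_of_pos ht0 _).le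
  have key : (t - r) ^ 2 + r ^ 2 * (1 - t ^ 2) + r ^ (p - 1) * t ^ (q + 1)
        + r ^ (p + 1) * t ^ (q + 1) - 2 * r ^ p * t ^ q
      = (t - r) ^ 2 + r ^ 2 * (1 - t ^ 2)
        + r ^ (p - 1) * t ^ q * (t + r ^ 2 * t - 2 * r) := by
    rw [hrp, hrp1, htq1]; ring
  rw [key]
  rcases le_or_gt 0 (t + r ^ 2 * t - 2 * r) with hA | hA
  · have h1 : 0 ≤ r ^ (p - 1) * t ^ q * (t + r ^ 2 * t - 2 * r) := by positivity
    nlinarith [h1, sq_nonneg (t - r), mul_nonneg (sq_nonneg r) (by nlinarith : (0:ℝ) ≤ 1 - t ^ 2)]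
  · have hle1 : r ^ (p - 1) ≤ 1 := Real.rpow_le_one hr0.le hr1.le (by linarith)
    have hle2 : t ^ q ≤ t := by
      calc t ^ q ≤ t ^ (1:ℝ) := Real.rpow_le_rpow_of_exponent_ge ht0 ht1.le hq
      _ = t := Real.rpow_one t
    have hle : r ^ (p - 1) * t ^ q ≤ t := by
      calc r ^ (p - 1) * t ^ q ≤ 1 * t ^ q := by nlinarith
      _ ≤ t := by linarith [one_mul (t ^ q)]
    have h2 : t * (t + r ^ 2 * t - 2 * r) ≤
        r ^ (p - 1) * t ^ q * (t + r ^ 2 * t - 2 * r) :=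
      mul_le_mul_of_nonpos_right hle hA.le
    nlinarith [sq_nonneg (t - r)]
end

section
/- For all integers $p, q \geq 2$ and all real $r, t \in (0,1)$, one has $(1 - r^{p-1}t^{q-1})\big((1 - r^{p-2}t^q) + (1 - r^p t^q)\big) \geq 2(1 - r^{p-2}t^q)(1 - r^p t^{q-2})$, equivalently $\frac{(1 - r^{p-2}t^q)(1 - r^p t^{q-2})}{1 - r^{p-1}t^{q-1}} \leq (1 - r^{p-2}t^q) + (1 - r^p t^q)$. -/
theorem aux_stmt_4 (a r t : ℝ) (ha0 : 0 < a) (ha1 : a ≤ 1)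
    (hr0 : 0 < r) (hr1 : r < 1) (ht0 : 0 < t) (ht1 : t < 1) :
    (1 - a * r * t) * ((1 - a * t ^ 2) + (1 - a * r ^ 2 * t ^ 2)) ≥
      2 * (1 - a * t ^ 2) * (1 - a * r ^ 2) := by
  rcases le_or_gt 0 (t + r ^ 2 * t - 2 * r) with hg | hg
  · nlinarith [mul_nonneg ha0.le (sq_nonneg (r - t)),
      mul_nonneg (mul_nonneg ha0.le (sq_nonneg r)) (by nlinarith : (0:ℝ) ≤ 1 - t ^ 2),
      mul_nonneg (mul_nonneg (mul_nonneg (mul_pos ha0 ha0).le hr0.le) (sq_nonneg t)) hg]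
  · have h5 : (0:ℝ) ≤ (a - a * a) * (2 * r - t - r ^ 2 * t) :=
      mul_nonneg (by nlinarith) (by linarith)
    nlinarith [mul_nonneg ha0.le (sq_nonneg (r - t)),
      mul_nonneg (mul_nonneg (mul_nonneg ha0.le hr0.le)
        (mul_nonneg (mul_nonneg ht0.le ht0.le) ht0.le)) (sq_nonneg (1 - r)),
      mul_nonneg (mul_nonneg (mul_nonneg ha0.le (mul_nonneg hr0.le hr0.le))
        (sq_nonneg (1 - t))) (by linarith : (0:ℝ) ≤ 1 + 2 * t),
      mul_nonneg (mul_nonneg h5 hr0.le) (sq_nonneg t)]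

theorem stmt_4 (p q : ℕ) (hp : 2 ≤ p) (hq : 2 ≤ q) (r t : ℝ)
    (hr0 : 0 < r) (hr1 : r < 1) (ht0 : 0 < t) (ht1 : t < 1) :
    (1 - r ^ (p - 1) * t ^ (q - 1)) * ((1 - r ^ (p - 2) * t ^ q) + (1 - r ^ p * t ^ q)) ≥
      2 * (1 - r ^ (p - 2) * t ^ q) * (1 - r ^ p * t ^ (q - 2)) := by
  obtain ⟨m, rfl⟩ : ∃ m, p = m + 2 := ⟨p - 2, by omega⟩
  obtain ⟨n, rfl⟩ : ∃ n, q = n + 2 := ⟨q - 2, by omega⟩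
  have hA0 : 0 < r ^ m := pow_pos hr0 m
  have hA1 : r ^ m ≤ 1 := pow_le_one₀ hr0.le hr1.le
  have hB0 : 0 < t ^ n := pow_pos ht0 n
  have hB1 : t ^ n ≤ 1 := pow_le_one₀ ht0.le ht1.le
  have e1 : m + 2 - 1 = m + 1 := by omega
  have e2 : m + 2 - 2 = m := by omega
  have e3 : n + 2 - 1 = n + 1 := by omega
  have e4 : n + 2 - 2 = n := by omega
  rw [e1, e2, e3, e4]
  have h1 : r ^ (m + 1) = r ^ m * r := pow_succ r m
  have h2 : t ^ (n + 1) = t ^ n * t := pow_succ t n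
  have h3 : r ^ (m + 2) = r ^ m * r ^ 2 := pow_add r m 2
  have h4 : t ^ (n + 2) = t ^ n * t ^ 2 := pow_add t n 2
  rw [h1, h2, h3, h4]
  have key := aux_stmt_4 (r ^ m * t ^ n) r t (mul_pos hA0 hB0)
    (mul_le_one₀ hA1 hB0.le hB1) hr0 hr1 ht0 ht1
  nlinarith [key]
end

section
/- For all integers $p, q \geq 2$ and all real $r, t \in (-1,1)$ with $r \neq 0$ and $t \neq 0$, the quantity $b_{p,q}(r,t) = (1-r^p t^q)(1 - r^{2p-2}t^{2q-2}) + (p-1)(1-r^2) r^{p-2} t^q (1 - r^p t^{q-2}) + (q-1)(1-t^2) r^p t^{q-2} (1 - r^{p-2} t^q)$ is strictly positive. -/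
lemma amgm_pow (x : ℝ) (hx0 : 0 ≤ x) (hx1 : x ≤ 1) :
    ∀ m : ℕ, ((m : ℝ) + 1) * x ^ m * (1 - x ^ 2) ≤ 1 - x ^ (2 * m + 2) := by
  intro m
  induction m with
  | zero => norm_num
  | succ k ih =>
    have hXk : (0:ℝ) ≤ x ^ k := pow_nonneg hx0 k
    have hXk1 : x ^ k ≤ 1 := pow_le_one₀ hx0 hx1
    have e2 : x ^ (2 * k + 2) = (x ^ k) ^ 2 * x ^ 2 := by ring
    have e3 : x ^ (2 * (k + 1) + 2) = (x ^ k) ^ 2 * x ^ 2 * x ^ 2 := by ring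
    have e1 : x ^ (k + 1) = x ^ k * x := by ring
    rw [e2] at ih
    rw [e3, e1]
    have a1 : x ^ k * x ≤ 1 := by nlinarith
    have a2 : x ^ k * x ^ 2 ≤ 1 := by nlinarith
    have h1 : 0 ≤ (1 - x) * (1 - x ^ k * x) * (1 - x ^ k * x ^ 2) :=
      mul_nonneg (mul_nonneg (by linarith) (by linarith)) (by linarith)
    have h2 := mul_le_mul_of_nonneg_left ih hx0
    push_cast
    nlinarith [h1, h2]

set_option maxHeartbeats 1000000 in
theorem stmt_6 (p q : ℕ) (hp : 2 ≤ p) (hq : 2 ≤ q) (r t : ℝ)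
    (hr : r ∈ Set.Ioo (-1 : ℝ) 1) (ht : t ∈ Set.Ioo (-1 : ℝ) 1)
    (hr0 : r ≠ 0) (ht0 : t ≠ 0) :
    0 < (1 - r ^ p * t ^ q) * (1 - r ^ (2 * p - 2) * t ^ (2 * q - 2))
      + ((p : ℝ) - 1) * (1 - r ^ 2) * r ^ (p - 2) * t ^ q * (1 - r ^ p * t ^ (q - 2))
      + ((q : ℝ) - 1) * (1 - t ^ 2) * r ^ p * t ^ (q - 2) * (1 - r ^ (p - 2) * t ^ q) := by
  obtain ⟨hr1, hr2⟩ := hr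
  obtain ⟨ht1, ht2⟩ := ht
  obtain ⟨m, rfl⟩ : ∃ m, p = m + 2 := ⟨p - 2, by omega⟩
  obtain ⟨n, rfl⟩ : ∃ n, q = n + 2 := ⟨q - 2, by omega⟩
  rw [show m + 2 - 2 = m from by omega, show n + 2 - 2 = n from by omega,
    show 2 * (m + 2) - 2 = 2 * m + 2 from by omega,
    show 2 * (n + 2) - 2 = 2 * n + 2 from by omega]
  push_cast
  rw [show r ^ (m + 2) = r ^ m * r ^ 2 from by ring,
    show r ^ (2 * m + 2) = (r ^ m) ^ 2 * r ^ 2 from by ring,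
    show t ^ (n + 2) = t ^ n * t ^ 2 from by ring,
    show t ^ (2 * n + 2) = (t ^ n) ^ 2 * t ^ 2 from by ring]
  have habsr : |r| < 1 := abs_lt.mpr ⟨hr1, hr2⟩
  have habst : |t| < 1 := abs_lt.mpr ⟨ht1, ht2⟩
  have hr20 : 0 < r ^ 2 := by positivity
  have ht20 : 0 < t ^ 2 := by positivity
  have hr21 : r ^ 2 < 1 := by nlinarith
  have ht21 : t ^ 2 < 1 := by nlinarith
  have hX0 : 0 < |r ^ m| := abs_pos.mpr (pow_ne_zero m hr0)
  have hY0 : 0 < |t ^ n| := abs_pos.mpr (pow_ne_zero n ht0)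
  have hX1 : |r ^ m| ≤ 1 := by
    rw [abs_pow]; exact pow_le_one₀ (abs_nonneg r) habsr.le
  have hY1 : |t ^ n| ≤ 1 := by
    rw [abs_pow]; exact pow_le_one₀ (abs_nonneg t) habst.le
  have keyR : ((m : ℝ) + 1) * |r ^ m| * (1 - r ^ 2) ≤ 1 - |r ^ m| ^ 2 * r ^ 2 := by
    have h := amgm_pow |r| (abs_nonneg r) habsr.le m
    rw [show |r| ^ (2 * m + 2) = (|r| ^ m) ^ 2 * |r| ^ 2 from by ring,
      sq_abs, ← abs_pow] at h
    exact h
  have keyT : ((n : ℝ) + 1) * |t ^ n| * (1 - t ^ 2) ≤ 1 - |t ^ n| ^ 2 * t ^ 2 := by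
    have h := amgm_pow |t| (abs_nonneg t) habst.le n
    rw [show |t| ^ (2 * n + 2) = (|t| ^ n) ^ 2 * |t| ^ 2 from by ring,
      sq_abs, ← abs_pow] at h
    exact h
  obtain ⟨X, hX⟩ : ∃ X, |r ^ m| = X := ⟨_, rfl⟩
  obtain ⟨Y, hY⟩ : ∃ Y, |t ^ n| = Y := ⟨_, rfl⟩
  rw [hX] at hX0 hX1 keyR
  rw [hY] at hY0 hY1 keyT
  have hrt : r ^ 2 * t ^ 2 < 1 := by nlinarith
  have hXY1 : X * Y ≤ 1 := by nlinarith [mul_le_mul_of_nonneg_right hX1 hY0.le]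
  have hXYrt : X * Y * (r ^ 2 * t ^ 2) < 1 := by
    have := mul_le_mul_of_nonneg_right hXY1 (le_of_lt (by positivity : (0:ℝ) < r ^ 2 * t ^ 2))
    nlinarith
  have hXYr : X * Y * r ^ 2 < 1 := by
    have := mul_le_mul_of_nonneg_right hXY1 hr20.le
    nlinarith
  have hXYt : X * Y * t ^ 2 < 1 := by
    have := mul_le_mul_of_nonneg_right hXY1 ht20.le
    nlinarith
  have hXY2 : X ^ 2 * Y ^ 2 * (r ^ 2 * t ^ 2) < 1 := by
    have h1 : X ^ 2 * Y ^ 2 ≤ 1 := by nlinarith [mul_pos hX0 hY0]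
    have := mul_le_mul_of_nonneg_right h1 (le_of_lt (by positivity : (0:ℝ) < r ^ 2 * t ^ 2))
    nlinarith
  have hXr : X * r ^ 2 < 1 := by
    have := mul_le_mul_of_nonneg_right hX1 hr20.le
    nlinarith
  have hYt : Y * t ^ 2 < 1 := by
    have := mul_le_mul_of_nonneg_right hY1 ht20.le
    nlinarith
  have hm1 : (0:ℝ) < (m : ℝ) + 1 := by positivity
  have hn1 : (0:ℝ) < (n : ℝ) + 1 := by positivity
  have e1 : 0 < (1 - X * Y * (r ^ 2 * t ^ 2)) * (1 - X ^ 2 * Y ^ 2 * (r ^ 2 * t ^ 2)) :=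
    mul_pos (by linarith) (by linarith)
  have e2 : 0 < (((m : ℝ) + 1) * (1 - r ^ 2) * t ^ 2 * (1 - X * Y * r ^ 2)) * (X * Y) :=
    mul_pos (mul_pos (mul_pos (mul_pos hm1 (by linarith)) ht20) (by linarith))
      (mul_pos hX0 hY0)
  have e3 : 0 < (((n : ℝ) + 1) * (1 - t ^ 2) * r ^ 2 * (1 - X * Y * t ^ 2)) * (X * Y) :=
    mul_pos (mul_pos (mul_pos (mul_pos hn1 (by linarith)) hr20) (by linarith))
      (mul_pos hX0 hY0)
  have b2 := mul_le_mul_of_nonneg_right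
    (mul_le_mul_of_nonneg_right keyR hY0.le)
    (show (0:ℝ) ≤ t ^ 2 * (1 + X * Y * r ^ 2) from by positivity)
  have b3 := mul_le_mul_of_nonneg_right
    (mul_le_mul_of_nonneg_right keyT hX0.le)
    (show (0:ℝ) ≤ r ^ 2 * (1 + X * Y * t ^ 2) from by positivity)
  have Hpos : 0 < (1 - X * r ^ 2) * ((1 - Y * t ^ 2) * (1 - X ^ 2 * Y ^ 2 * (r ^ 2 * t ^ 2))) :=
    mul_pos (by linarith) (mul_pos (by linarith) (by linarith))
  rcases abs_cases (r ^ m) with ⟨h1, _⟩ | ⟨h1, _⟩ <;>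
    rcases abs_cases (t ^ n) with ⟨h2, _⟩ | ⟨h2, _⟩ <;> rw [hX] at h1 <;> rw [hY] at h2
  · rw [show r ^ m = X from h1.symm, show t ^ n = Y from h2.symm]
    linarith [e1, e2, e3]
  · rw [show r ^ m = X from h1.symm, show t ^ n = -Y from by linarith]
    linarith [b2, b3, Hpos]
  · rw [show r ^ m = -X from by linarith, show t ^ n = Y from h2.symm]
    linarith [b2, b3, Hpos]
  · rw [show r ^ m = -X from by linarith, show t ^ n = -Y from by linarith]
    linarith [e1, e2, e3]
end

section
/- For all real $p \geq 3$, $q \geq 1$, and $r, t \in (0,1)$, the quantity $\hat{j}_{p,q}(r,t) = 2 r^{3-p} t^{1-q} - (q+1) r^2 - (p-1) t^2 + (p+q-2) r^2 t^2$ is nonnegative. -/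
lemma key_7 (x m : ℝ) (hx0 : 0 < x) (hx1 : x < 1) (hm : 0 ≤ m) :
    1 + m * (1 - x ^ 2) / 2 ≤ x ^ (-m) := by
  have hlog : Real.log (x ^ 2) ≤ x ^ 2 - 1 := by
    have := Real.log_le_sub_one_of_pos (x := x ^ 2) (by positivity)
    linarith
  have h2 : Real.log (x ^ 2) = 2 * Real.log x := by
    rw [Real.log_pow]; push_cast; ring
  have hlx : Real.log x ≤ (x ^ 2 - 1) / 2 := by linarith [h2 ▸ hlog]
  have h3 : m * (1 - x ^ 2) / 2 ≤ -m * Real.log x := by nlinarith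
  calc 1 + m * (1 - x ^ 2) / 2 ≤ 1 + (-m * Real.log x) := by linarith
    _ ≤ Real.exp (-m * Real.log x) := by linarith [Real.add_one_le_exp (-m * Real.log x)]
    _ = x ^ (-m) := by rw [Real.rpow_def_of_pos hx0]; ring_nf

theorem stmt_7 (p q r t : ℝ) (hp : 3 ≤ p) (hq : 1 ≤ q)
    (hr0 : 0 < r) (hr1 : r < 1) (ht0 : 0 < t) (ht1 : t < 1) :
    0 ≤ 2 * r ^ (3 - p) * t ^ (1 - q) - (q + 1) * r ^ 2 - (p - 1) * t ^ 2
        + (p + q - 2) * r ^ 2 * t ^ 2 := by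
  have hA : 1 + (p - 3) * (1 - r ^ 2) / 2 ≤ r ^ (3 - p) := by
    have := key_7 r (p - 3) hr0 hr1 (by linarith)
    rwa [show -(p - 3) = 3 - p by ring] at this
  have hB : 1 + (q - 1) * (1 - t ^ 2) / 2 ≤ t ^ (1 - q) := by
    have := key_7 t (q - 1) ht0 ht1 (by linarith)
    rwa [show -(q - 1) = 1 - q by ring] at this
  have ha0 : (0:ℝ) < 1 + (p - 3) * (1 - r ^ 2) / 2 := by nlinarith [mul_nonneg (by linarith : (0:ℝ) ≤ p - 3) (by nlinarith : (0:ℝ) ≤ 1 - r ^ 2)]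
  have hb0 : (0:ℝ) < 1 + (q - 1) * (1 - t ^ 2) / 2 := by nlinarith [mul_nonneg (by linarith : (0:ℝ) ≤ q - 1) (by nlinarith : (0:ℝ) ≤ 1 - t ^ 2)]
  have hAB : (1 + (p - 3) * (1 - r ^ 2) / 2) * (1 + (q - 1) * (1 - t ^ 2) / 2)
      ≤ r ^ (3 - p) * t ^ (1 - q) := by
    apply mul_le_mul hA hB (le_of_lt hb0) (le_trans (le_of_lt ha0) hA)
  nlinarith [mul_nonneg (mul_nonneg (by linarith : (0:ℝ) ≤ p - 3) (by linarith : (0:ℝ) ≤ q - 1)) (le_of_lt <| (mul_pos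
      (by nlinarith : (0:ℝ) < 1 - r ^ 2) (by nlinarith : (0:ℝ) < 1 - t ^ 2))),
    mul_pos (by nlinarith : (0:ℝ) < 1 - r ^ 2) (by nlinarith : (0:ℝ) < 1 - t ^ 2)]
end

section
/- For all integers $p, q \geq 3$, the function $\bar{k}_{p,q}(r,t) = \frac{t^2 r^2 (1 - r^{p-1} t^{q-1})}{(p-1)(1-r^2)t^2 + (q-1)(1-t^2)r^2}$ is nondecreasing in $t$ on $(0,1)$ for each fixed $r \in (0,1)$, i.e. $\frac{\partial}{\partial t} \bar{k}_{p,q}(r,t) \geq 0$. -/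
/-!
With `a = p - 1` and `b = q - 1`, the `t`-derivative of `k̄` is `b r² t J / m²`, where
`J = 2 r² - C r^a t^b` and `C = (b + 2) r² + a t² - (a + b) r² t²`; this `J` is
`r^(p-1) t^(q-1) ĵ_{p,q}`. Bernoulli's inequality gives `r^(a-2) (1 + (a - 2)(1 - r)) ≤ 1` and
`t^b (1 + b (1 - t)) ≤ 1`, so `J ≥ 0` follows from the polynomial inequality
`C ≤ 2 (1 + (a - 2)(1 - r)) (1 + b (1 - t))`, whose gap is a sum of manifestly nonnegative terms.
-/

lemma pow_mul_one_add_mul_one_sub_le_one {x : ℝ} (h0 : 0 ≤ x) (h1 : x ≤ 1) (n : ℕ) :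
    x ^ n * (1 + n * (1 - x)) ≤ 1 := by
  induction n with
  | zero => simp
  | succ n ih =>
    have hxn : x ^ n ≤ 1 := pow_le_one₀ h0 h1
    rw [pow_succ]
    push_cast
    nlinarith [mul_le_mul_of_nonneg_left ih h0, pow_nonneg h0 n,
      mul_le_mul_of_nonneg_right hxn (mul_nonneg h0 (sub_nonneg.2 h1))]

lemma quadratic_le_two_mul_one_add_mul_one_add {a b r t : ℝ} (ha : 2 ≤ a) (hb : 0 ≤ b)
    (hr0 : 0 ≤ r) (hr1 : r ≤ 1) (ht0 : 0 ≤ t) (ht1 : t ≤ 1) :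
    (b + 2) * r ^ 2 + a * t ^ 2 - (a + b) * r ^ 2 * t ^ 2 ≤
      2 * (1 + (a - 2) * (1 - r)) * (1 + b * (1 - t)) := by
  have hA : 0 ≤ (1 - t) * (2 - r ^ 2 * (1 + t)) := mul_nonneg (by linarith) (by nlinarith)
  have hB : 0 ≤ (1 - r) * (2 - t ^ 2 * (1 + r)) := mul_nonneg (by linarith) (by nlinarith)
  have hAB : 0 ≤ (a - 2) * b * ((1 - r) * (1 - t)) :=
    mul_nonneg (mul_nonneg (by linarith) hb) (mul_nonneg (by linarith) (by linarith))
  have hC : 0 ≤ (1 - r ^ 2) * (1 - t ^ 2) := mul_nonneg (by nlinarith) (by nlinarith)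
  -- the gap is exactly `2 hC + (a - 2) hB + b hA + 2 hAB`
  linarith [mul_nonneg hb hA, mul_nonneg (sub_nonneg.2 ha) hB]

def kBarDen (a b : ℕ) (r t : ℝ) : ℝ :=
  a * (1 - r ^ 2) * t ^ 2 + b * (1 - t ^ 2) * r ^ 2

noncomputable def kBar (a b : ℕ) (r t : ℝ) : ℝ :=
  t ^ 2 * r ^ 2 * (1 - r ^ a * t ^ b) / kBarDen a b r t

def kBarDerivFactor (a b : ℕ) (r t : ℝ) : ℝ :=
  2 * r ^ 2 - ((b + 2) * r ^ 2 + a * t ^ 2 - (a + b) * r ^ 2 * t ^ 2) * r ^ a * t ^ b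

lemma kBarDerivFactor_nonneg {a : ℕ} (b : ℕ) (ha : 2 ≤ a) {r t : ℝ} (hr0 : 0 ≤ r)
    (hr1 : r ≤ 1) (ht0 : 0 ≤ t) (ht1 : t ≤ 1) : 0 ≤ kBarDerivFactor a b r t := by
  obtain ⟨c, rfl⟩ := Nat.exists_eq_add_of_le' ha
  have hC := quadratic_le_two_mul_one_add_mul_one_add (a := c + 2) (b := b)
    (by linarith [c.cast_nonneg (α := ℝ)]) b.cast_nonneg hr0 hr1 ht0 ht1
  rw [add_sub_cancel_right] at hC
  have hrc := pow_mul_one_add_mul_one_sub_le_one hr0 hr1 c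
  have htb := pow_mul_one_add_mul_one_sub_le_one ht0 ht1 b
  have hCuv : ((b + 2) * r ^ 2 + (c + 2) * t ^ 2 - (c + 2 + b) * r ^ 2 * t ^ 2) *
      (r ^ c * t ^ b) ≤ 2 :=
    calc _ ≤ 2 * (1 + c * (1 - r)) * (1 + b * (1 - t)) * (r ^ c * t ^ b) := by gcongr
      _ = 2 * ((r ^ c * (1 + c * (1 - r))) * (t ^ b * (1 + b * (1 - t)))) := by ring
      _ ≤ 2 * (1 * 1) := by gcongr
      _ = 2 := by ring
  have hfactor : kBarDerivFactor (c + 2) b r t = r ^ 2 * (2 -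
      ((b + 2) * r ^ 2 + (c + 2) * t ^ 2 - (c + 2 + b) * r ^ 2 * t ^ 2) * (r ^ c * t ^ b)) := by
    unfold kBarDerivFactor; push_cast; ring
  rw [hfactor]
  exact mul_nonneg (sq_nonneg r) (sub_nonneg.2 hCuv)

lemma hasDerivAt_kBar (a b : ℕ) (r : ℝ) {t : ℝ} (ht : kBarDen a b r t ≠ 0) :
    HasDerivAt (kBar a b r)
      (b * r ^ 2 * t * kBarDerivFactor a b r t / kBarDen a b r t ^ 2) t := by
  have hN : HasDerivAt (fun t : ℝ => t ^ 2 * r ^ 2 * (1 - r ^ a * t ^ b))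
      (↑2 * t ^ (2 - 1) * r ^ 2 * (1 - r ^ a * t ^ b) +
        t ^ 2 * r ^ 2 * -(r ^ a * (↑b * t ^ (b - 1)))) t :=
    ((hasDerivAt_pow 2 t).mul_const (r ^ 2)).mul
      (((hasDerivAt_pow b t).const_mul (r ^ a)).const_sub 1)
  have hD : HasDerivAt (kBarDen a b r)
      (a * (1 - r ^ 2) * (↑2 * t ^ (2 - 1)) + b * -(↑2 * t ^ (2 - 1)) * r ^ 2) t :=
    ((hasDerivAt_pow 2 t).const_mul ((a : ℝ) * (1 - r ^ 2))).add
      ((((hasDerivAt_pow 2 t).const_sub 1).const_mul (b : ℝ)).mul_const (r ^ 2))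
  refine (hN.div hD ht).congr_deriv ?_
  rw [div_left_inj' (pow_ne_zero 2 ht)]
  unfold kBarDerivFactor kBarDen
  rcases b with _ | b <;>
    simp only [Nat.add_one_sub_one, Nat.zero_sub, Nat.cast_zero, Nat.cast_succ, pow_succ,
      pow_zero] <;>
    ring

lemma kBarDen_pos (a b : ℕ) (ha : 0 < a) {r t : ℝ} (hr0 : 0 ≤ r) (hr1 : r < 1) (ht0 : 0 < t)
    (ht1 : t ≤ 1) : 0 < kBarDen a b r t := by
  have : (0 : ℝ) < 1 - r ^ 2 := by nlinarith
  have : (0 : ℝ) ≤ 1 - t ^ 2 := by nlinarith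
  unfold kBarDen
  positivity

theorem kBar_monotoneOn {a : ℕ} (b : ℕ) (ha : 2 ≤ a) {r : ℝ} (hr0 : 0 ≤ r) (hr1 : r < 1) :
    MonotoneOn (kBar a b r) (Set.Ioo 0 1) := by
  have hderiv (t : ℝ) (ht : t ∈ Set.Ioo 0 1) := hasDerivAt_kBar a b r
    (kBarDen_pos a b (by omega) hr0 hr1 ht.1 ht.2.le).ne'
  refine monotoneOn_of_hasDerivWithinAt_nonneg (convex_Ioo 0 1)
    (f' := fun t ↦ b * r ^ 2 * t * kBarDerivFactor a b r t / kBarDen a b r t ^ 2)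
    (fun t ht ↦ (hderiv t ht).continuousAt.continuousWithinAt) ?_ ?_ <;> rw [interior_Ioo]
  · exact fun t ht ↦ (hderiv t ht).hasDerivWithinAt
  · intro t ⟨ht0, ht1⟩
    have := kBarDerivFactor_nonneg b ha hr0 hr1.le ht0.le ht1.le
    positivity

theorem stmt_8 (p q : ℕ) (hp : 3 ≤ p) (hq : 3 ≤ q) (r : ℝ) (hr : r ∈ Set.Ioo (0 : ℝ) 1) :
    MonotoneOn (fun t : ℝ =>
      t ^ 2 * r ^ 2 * (1 - r ^ (p - 1) * t ^ (q - 1)) /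
        (((p : ℝ) - 1) * (1 - r ^ 2) * t ^ 2 + ((q : ℝ) - 1) * (1 - t ^ 2) * r ^ 2))
      (Set.Ioo (0 : ℝ) 1) := by
  convert kBar_monotoneOn (q - 1) (show 2 ≤ p - 1 by omega) hr.1.le hr.2 using 1
  funext t
  rw [kBar, kBarDen, Nat.cast_pred (by omega : 0 < p), Nat.cast_pred (by omega : 0 < q)]
end

section
/- For every real $r \in [0, 0.61)$ and every integer $p \geq 10$, the quantity $\hat{Q}_p(r) = -\frac{1}{2}\log(1+r^2) + \frac{\log(p-1)}{p-1} \cdot \frac{r^2}{1-r^2}$ is nonpositive. -/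
theorem stmt_9 (p : ℕ) (hp : 10 ≤ p) (r : ℝ) (hr0 : 0 ≤ r) (hr1 : r < 0.61) :
    -(1 / 2) * Real.log (1 + r ^ 2)
      + Real.log ((p : ℝ) - 1) / ((p : ℝ) - 1) * (r ^ 2 / (1 - r ^ 2)) ≤ 0 := by
  set t : ℝ := r ^ 2 with ht
  have ht0 : 0 ≤ t := sq_nonneg r
  have hta : t < 0.3721 := by
    have : r ^ 2 < 0.61 ^ 2 := by nlinarith
    simpa using this.trans_le (by norm_num)
  -- bound on log(p-1)/(p-1)
  have hp9 : (9:ℝ) ≤ (p:ℝ) - 1 := by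
    have : (10:ℝ) ≤ (p:ℝ) := by exact_mod_cast hp
    linarith
  have he9 : Real.exp 1 ≤ 9 := by
    have := Real.exp_one_lt_d9
    linarith
  have hc : Real.log ((p:ℝ) - 1) / ((p:ℝ) - 1) ≤ Real.log 9 / 9 :=
    Real.log_div_self_antitoneOn (by simpa using he9)
      (Set.mem_setOf_eq ▸ he9.trans hp9) hp9
  -- log 9 ≤ 13/4 * log 2
  have hlog9 : Real.log 9 ≤ 13 / 4 * Real.log 2 := by
    have h1 : (4:ℝ) * Real.log 9 = Real.log (9 ^ (4:ℕ)) := by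
      rw [Real.log_pow]; push_cast; ring
    have h2 : (13:ℝ) * Real.log 2 = Real.log (2 ^ (13:ℕ)) := by
      rw [Real.log_pow]; push_cast; ring
    have h3 : Real.log ((9:ℝ) ^ (4:ℕ)) ≤ Real.log ((2:ℝ) ^ (13:ℕ)) := by
      apply Real.log_le_log (by positivity)
      norm_num
    linarith
  have hlog2 : Real.log 2 < 0.6931472 := by
    have := Real.log_two_lt_d9; linarith
  have hc' : Real.log ((p:ℝ) - 1) / ((p:ℝ) - 1) ≤ 13 / 4 * 0.6931472 / 9 := by
    have : Real.log 9 / 9 ≤ 13 / 4 * 0.6931472 / 9 := by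
      apply div_le_div_of_nonneg_right ?_ (by norm_num) |>.trans_eq rfl
      nlinarith
    linarith
  have hcpos : 0 ≤ Real.log ((p:ℝ) - 1) / ((p:ℝ) - 1) := by
    apply div_nonneg _ (by linarith)
    exact Real.log_nonneg (by linarith)
  -- lower bound on log(1.3721)
  have hla : (0.3038 : ℝ) ≤ Real.log 1.3721 := by
    have h1 : ((1.0822:ℝ) ^ (4:ℕ)) ≤ 1.3721 := by norm_num
    have h2 : Real.log ((1.0822:ℝ) ^ (4:ℕ)) ≤ Real.log 1.3721 :=
      Real.log_le_log (by positivity) h1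
    have h3 : Real.log ((1.0822:ℝ) ^ (4:ℕ)) = 4 * Real.log 1.0822 := by
      rw [Real.log_pow]; push_cast; ring
    have h4 : 1 - (1.0822:ℝ)⁻¹ ≤ Real.log 1.0822 :=
      Real.one_sub_inv_le_log_of_pos (by norm_num)
    have h5 : (0.07595 : ℝ) ≤ 1 - (1.0822:ℝ)⁻¹ := by
      norm_num
    linarith
  -- concavity: log(1+t) ≥ (log(1.3721)/0.3721) * t
  have hconc : Real.log 1.3721 / 0.3721 * t ≤ Real.log (1 + t) := by
    rcases eq_or_lt_of_le ht0 with h0 | h0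
    · simp [← h0]
    · have hs0 : 0 < t / 0.3721 := by positivity
      have hs1 : t / 0.3721 < 1 := by rw [div_lt_one (by norm_num)]; linarith
      have key := strictConcaveOn_log_Ioi.concaveOn.2 (Set.mem_Ioi.mpr (by norm_num : (0:ℝ) < 1))
        (Set.mem_Ioi.mpr (by norm_num : (0:ℝ) < 1.3721))
        (by linarith : (0:ℝ) ≤ 1 - t / 0.3721) (le_of_lt hs0) (by ring)
      have harg : (1 - t / 0.3721) • (1:ℝ) + (t / 0.3721) • (1.3721:ℝ) = 1 + t := by
        simp only [smul_eq_mul]; field_simp; ring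
      rw [harg] at key
      simp only [smul_eq_mul, Real.log_one, mul_zero, zero_add] at key
      calc Real.log 1.3721 / 0.3721 * t = t / 0.3721 * Real.log 1.3721 := by ring
        _ ≤ Real.log (1 + t) := key
  -- bound t/(1-t)
  have h1t : (0.6279:ℝ) ≤ 1 - t := by linarith
  have hfrac : t / (1 - t) ≤ t / 0.6279 :=
    div_le_div_of_nonneg_left ht0 (by norm_num) h1t
  -- combine
  have hterm2 : Real.log ((p:ℝ) - 1) / ((p:ℝ) - 1) * (t / (1 - t))
      ≤ 13 / 4 * 0.6931472 / 9 * (t / 0.6279) := by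
    calc Real.log ((p:ℝ) - 1) / ((p:ℝ) - 1) * (t / (1 - t))
        ≤ Real.log ((p:ℝ) - 1) / ((p:ℝ) - 1) * (t / 0.6279) :=
          mul_le_mul_of_nonneg_left hfrac hcpos
      _ ≤ 13 / 4 * 0.6931472 / 9 * (t / 0.6279) := by
          apply mul_le_mul_of_nonneg_right hc' (by positivity)
  have hterm1 : -(1/2) * Real.log (1 + t) ≤ -(1/2) * (Real.log 1.3721 / 0.3721 * t) := by
    nlinarith [hconc]
  have hfinal : -(1/2) * (Real.log 1.3721 / 0.3721 * t) + 13 / 4 * 0.6931472 / 9 * (t / 0.6279) ≤ 0 := by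
    have hcoef : 13 / 4 * 0.6931472 / 9 / 0.6279 ≤ 1 / 2 * (Real.log 1.3721 / 0.3721) := by
      have h2 : (13:ℝ) / 4 * 0.6931472 / 9 / 0.6279 ≤ 1 / 2 * (0.3038 / 0.3721) := by norm_num
      have h3 : (1:ℝ) / 2 * ((0.3038:ℝ) / 0.3721) ≤ 1 / 2 * (Real.log 1.3721 / 0.3721) := by
        gcongr
      linarith
    have hmul := mul_le_mul_of_nonneg_right hcoef ht0
    norm_num only at hmul ⊢
    nlinarith [hmul]
  linarith
end

section
/- Define $f(\gamma, E) = \frac{\gamma}{E/\sqrt{\gamma} - 2} + \frac{1-\gamma}{E/\sqrt{1-\gamma} - 2}$ for $\gamma \in (0,1)$ and $E = 3$. Then $\sup_{\gamma \in (0,1)} f(\gamma, 3) \leq 1$, with the supremum approached as $\gamma \to 0$ or $\gamma \to 1$. -/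
lemma aux_term (x : ℝ) (h0 : 0 < x) (h1 : x < 1) :
    x / (3 / Real.sqrt x - 2) ≤ x := by
  have hs : 0 < Real.sqrt x := Real.sqrt_pos.mpr h0
  have hs1 : Real.sqrt x ≤ 1 := by
    rw [show (1:ℝ) = Real.sqrt 1 by simp]
    exact Real.sqrt_le_sqrt h1.le
  have hden : (1:ℝ) ≤ 3 / Real.sqrt x - 2 := by
    have : (3:ℝ) ≤ 3 / Real.sqrt x := by
      rw [le_div_iff₀ hs]; nlinarith
    linarith
  exact div_le_self h0.le hden

theorem stmt_12 (γ : ℝ) (h0 : 0 < γ) (h1 : γ < 1) :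
    γ / (3 / Real.sqrt γ - 2) + (1 - γ) / (3 / Real.sqrt (1 - γ) - 2) ≤ 1 := by
  have h2 := aux_term γ h0 h1
  have h3 := aux_term (1 - γ) (by linarith) (by linarith)
  linarith
end

section
/- For $\gamma \in (0, 1/2]$, the function $\bar{f}(\gamma) = 12 - 24\gamma - 27\sqrt{1-\gamma} + 23\sqrt{\gamma} + 4\gamma(\sqrt{\gamma} + \sqrt{1-\gamma})$ is nondecreasing and satisfies $\bar{f}(\gamma) \leq 0$, with $\bar{f}(1/2) = 0$. -/
/-!
Put `s = √γ` and `t = √(1 - γ)`. Then `2 s t f̄'(γ)` is a cubic polynomial in `s, t`, which is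
positive on the quarter circle `s² + t² = 1, s, t ≥ 0`: there it equals
`23 (s + t) + 12 s t (s + t - 1) - 36 s t ≥ 23 - 18`, as `s + t ≥ 1` and `s t ≤ 1/2`. Hence `f̄` is
nondecreasing on `[0, 1]`, and since `f̄(1/2) = 0` it is nonpositive on `(0, 1/2]`.
-/

open Real Set

noncomputable def fBar (γ : ℝ) : ℝ :=
  12 - 24 * γ - 27 * √(1 - γ) + 23 * √γ + 4 * γ * (√γ + √(1 - γ))

def fBarDerivNum (s t : ℝ) : ℝ :=
  27 * s + 23 * t - 48 * s * t + 12 * s ^ 2 * t + 8 * s * t ^ 2 - 4 * s ^ 3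

lemma fBarDerivNum_nonneg {s t : ℝ} (hs : 0 ≤ s) (ht : 0 ≤ t) (hst : s ^ 2 + t ^ 2 = 1) :
    0 ≤ fBarDerivNum s t := by
  have hsum : 1 ≤ s + t := by nlinarith [mul_nonneg hs ht]
  have hprod : s * t ≤ 1 / 2 := by nlinarith [sq_nonneg (s - t)]
  have hP : fBarDerivNum s t = 23 * (s + t) + 12 * (s * t) * (s + t - 1) - 36 * (s * t) := by
    rw [fBarDerivNum]
    linear_combination (-4 * s) * hst
  rw [hP]
  nlinarith [mul_nonneg (mul_nonneg hs ht) (sub_nonneg.2 hsum)]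

lemma hasDerivAt_fBar {x : ℝ} (hx₀ : 0 < x) (hx₁ : x < 1) :
    HasDerivAt fBar (fBarDerivNum √x √(1 - x) / (2 * √x * √(1 - x))) x := by
  have hs : HasDerivAt (√·) (1 / (2 * √x)) x := hasDerivAt_sqrt hx₀.ne'
  have ht : HasDerivAt (fun γ => √(1 - γ)) (-1 / (2 * √(1 - x))) x :=
    ((hasDerivAt_id' x).const_sub 1).sqrt (sub_pos.2 hx₁).ne'
  have h : HasDerivAt fBar _ x :=
    ((((hasDerivAt_id x).const_mul 24).const_sub 12).sub (ht.const_mul 27)).add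
      (hs.const_mul 23) |>.add (((hasDerivAt_id x).const_mul 4).mul (hs.add ht))
  convert h using 1
  have hs₀ : 0 < √x := sqrt_pos.2 hx₀
  have ht₀ : 0 < √(1 - x) := sqrt_pos.2 (sub_pos.2 hx₁)
  rw [fBarDerivNum, show id x = √x ^ 2 from (sq_sqrt hx₀.le).symm]
  field_simp
  ring

lemma monotoneOn_fBar : MonotoneOn fBar (Icc 0 1) := by
  refine monotoneOn_of_deriv_nonneg (convex_Icc 0 1) (by unfold fBar; fun_prop) ?_ ?_ <;>
    rw [interior_Icc] <;> intro x hx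
  · exact (hasDerivAt_fBar hx.1 hx.2).differentiableAt.differentiableWithinAt
  · rw [(hasDerivAt_fBar hx.1 hx.2).deriv]
    exact div_nonneg (fBarDerivNum_nonneg (sqrt_nonneg _) (sqrt_nonneg _)
      (by rw [sq_sqrt hx.1.le, sq_sqrt (sub_pos.2 hx.2).le]; ring)) (by positivity)

lemma fBar_half : fBar (1 / 2) = 0 := by
  rw [fBar, show (1 : ℝ) - 1 / 2 = 1 / 2 by norm_num]
  ring

theorem stmt_13 :
    MonotoneOn (fun γ : ℝ =>
        12 - 24 * γ - 27 * Real.sqrt (1 - γ) + 23 * Real.sqrt γ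
          + 4 * γ * (Real.sqrt γ + Real.sqrt (1 - γ)))
      (Set.Ioc (0 : ℝ) (1 / 2)) ∧
    (∀ γ ∈ Set.Ioc (0 : ℝ) (1 / 2),
      12 - 24 * γ - 27 * Real.sqrt (1 - γ) + 23 * Real.sqrt γ
        + 4 * γ * (Real.sqrt γ + Real.sqrt (1 - γ)) ≤ 0) ∧
    12 - 24 * (1 / 2 : ℝ) - 27 * Real.sqrt (1 - 1 / 2) + 23 * Real.sqrt (1 / 2)
      + 4 * (1 / 2) * (Real.sqrt (1 / 2) + Real.sqrt (1 - 1 / 2)) = 0 := by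
  have hsub : Ioc (0 : ℝ) (1 / 2) ⊆ Icc 0 1 := fun γ hγ => ⟨hγ.1.le, hγ.2.trans (by norm_num)⟩
  have hmono : MonotoneOn fBar (Ioc 0 (1 / 2)) := monotoneOn_fBar.mono hsub
  refine ⟨hmono, fun γ hγ => ?_, fBar_half⟩
  exact fBar_half ▸ hmono hγ ⟨by norm_num, le_rfl⟩ hγ.2
end
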